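/- For 2 ≤ r ≤ n-1, every permutation σ ∈ S_n satisfies σ ≤ r·ω_r or σ ≥ r·e_r in the Bruhat order (where r·ω_r = r,n,n-1,...,r+1,r-1,...,1 and r·e_r = r,1,2,...,r-1,r+1,...,n in one-line notation). Consequently S_n = [e, r·ω_r] ∪ [r·e_r, ω] as a union of Bruhat intervals. -/

import Mathlib

/-- Number of inversions (Coxeter length) of a permutation of `Fin n`. -/
def invCount {n : ℕ} (σ : Equiv.Perm (Fin n)) : ℕ :=
  ((Finset.univ : Finset (Fin n × Fin n)).filter
    (fun p => p.1 < p.2 ∧ σ p.2 < σ p.1)).card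

/-- Covering relation of the strong Bruhat order: multiply by a transposition
(on values) and increase the length by exactly one. -/
def BruhatCover {n : ℕ} (u v : Equiv.Perm (Fin n)) : Prop :=
  (∃ a b : Fin n, a ≠ b ∧ v = Equiv.swap a b * u) ∧ invCount v = invCount u + 1

/-- The strong Bruhat order on `Equiv.Perm (Fin n)`. -/
def BruhatLE {n : ℕ} : Equiv.Perm (Fin n) → Equiv.Perm (Fin n) → Prop :=
  Relation.ReflTransGen BruhatCover

/-- Sum of the first `j` one-line values of `σ` (values taken in `{1, …, n}`). -/
def firstSum {n : ℕ} (σ : Equiv.Perm (Fin n)) (j : ℕ) : ℕ :=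
  ∑ i ∈ Finset.univ.filter (fun i : Fin n => (i : ℕ) < j), ((σ i : ℕ) + 1)

/-!
Everything is decided by the first one-line value. Both `r·ω_r` and `r·e_r` start with `r`; the
tail of the first is decreasing, that of the second increasing. If `σ(1) ≤ r`, climb from `σ` by
Bruhat covers that keep the first value at most `r`: swap an ascent of the tail (adjacent
positions), or, once the tail is decreasing, swap the values `σ(1)` and `σ(1) + 1`. A permutation
admitting neither move has first value `r` and decreasing tail, so it is `r·ω_r`. Dually, if
`σ(1) ≥ r` one descends to `r·e_r`. The same argument with `ω` (first value `n`) and `e` (first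
value `1`) gives `e ≤ σ ≤ ω`.
-/

open Equiv Set Order

/-- Both maps send `s` onto the complement of the common image of `sᶜ`, and a strictly monotone map
on a well-order is determined by its range. -/
theorem Equiv.eq_of_strictMonoOn_of_eqOn_compl {α β : Type*} [LinearOrder α] [WellFoundedLT α]
    [LinearOrder β] {σ τ : α ≃ β} {s : Set α} (hσ : StrictMonoOn σ s) (hτ : StrictMonoOn τ s)
    (h : EqOn σ τ sᶜ) : σ = τ := by
  have himage : σ '' s = τ '' s := by
    rw [← compl_inj_iff, ← image_compl_eq σ.bijective, ← image_compl_eq τ.bijective, h.image_eq]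
  have hrestrict : s.domRestrict σ = s.domRestrict τ := by
    rwa [← hσ.domRestrict.range_inj hτ.domRestrict, range_domRestrict, range_domRestrict]
  ext x
  by_cases hx : x ∈ s
  · exact congrFun hrestrict ⟨x, hx⟩
  · exact h hx

theorem Equiv.eq_of_strictAntiOn_of_eqOn_compl {α β : Type*} [LinearOrder α] [WellFoundedLT α]
    [LinearOrder β] {σ τ : α ≃ β} {s : Set α} (hσ : StrictAntiOn σ s) (hτ : StrictAntiOn τ s)
    (h : EqOn σ τ sᶜ) : σ = τ :=
  Equiv.eq_of_strictMonoOn_of_eqOn_compl (β := βᵒᵈ) hσ hτ h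

theorem exists_lt_succ_of_not_strictAntiOn {α β : Type*} [LinearOrder α] [SuccOrder α]
    [IsSuccArchimedean α] [LinearOrder β] {f : α → β} (hf : Function.Injective f) {s : Set α}
    (hs : s.OrdConnected) (h : ¬StrictAntiOn f s) :
    ∃ a, ¬IsMax a ∧ a ∈ s ∧ succ a ∈ s ∧ f a < f (succ a) := by
  contrapose! h
  exact strictAntiOn_of_succ_lt hs fun a ha has hsa =>
    (h a ha has hsa).lt_of_ne (hf.ne (lt_succ_of_not_isMax ha).ne')

theorem exists_succ_lt_of_not_strictMonoOn {α β : Type*} [LinearOrder α] [SuccOrder α]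
    [IsSuccArchimedean α] [LinearOrder β] {f : α → β} (hf : Function.Injective f) {s : Set α}
    (hs : s.OrdConnected) (h : ¬StrictMonoOn f s) :
    ∃ a, ¬IsMax a ∧ a ∈ s ∧ succ a ∈ s ∧ f (succ a) < f a :=
  exists_lt_succ_of_not_strictAntiOn (β := βᵒᵈ) hf hs h

section Bruhat

variable {n : ℕ}

def invSet (σ : Perm (Fin n)) : Finset (Fin n × Fin n) :=
  Finset.univ.filter fun p => p.1 < p.2 ∧ σ p.2 < σ p.1

theorem invCount_eq_card_invSet (σ : Perm (Fin n)) : invCount σ = (invSet σ).card := rfl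

theorem invCount_le_card (σ : Perm (Fin n)) : invCount σ ≤ Fintype.card (Fin n × Fin n) :=
  Finset.card_filter_le _ _

theorem invCount_inv (σ : Perm (Fin n)) : invCount σ⁻¹ = invCount σ := by
  have : invSet σ⁻¹ = (invSet σ).map ((prodComm _ _).trans (σ.prodCongr σ)).toEmbedding := by
    ext ⟨x, y⟩
    simp only [invSet, Finset.mem_map_equiv, Finset.mem_filter, Finset.mem_univ, true_and]
    simp [and_comm]
  rw [invCount_eq_card_invSet, invCount_eq_card_invSet, this, Finset.card_map]

theorem swap_lt_swap_iff_of_covBy {i j x y : Fin n} (hij : i ⋖ j) (hxy : (x, y) ≠ (i, j))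
    (hyx : (x, y) ≠ (j, i)) : swap i j x < swap i j y ↔ x < y := by
  rw [Fin.covBy_iff, Nat.covBy_iff_add_one_eq] at hij
  simp only [ne_eq, Prod.mk.injEq, Fin.ext_iff] at hxy hyx
  simp only [swap_apply_def, Fin.lt_def, Fin.ext_iff]
  split_ifs <;> omega

theorem invSet_mul_swap_of_covBy {σ : Perm (Fin n)} {i j : Fin n} (hij : i ⋖ j) (h : σ i < σ j) :
    invSet (σ * swap i j) =
      insert (i, j) ((invSet σ).map ((swap i j).prodCongr (swap i j)).toEmbedding) := by
  ext ⟨x, y⟩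
  simp only [invSet, Finset.mem_insert, Finset.mem_map_equiv, Finset.mem_filter, Finset.mem_univ,
    true_and]
  simp only [prodCongr_symm, symm_swap, prodCongr_apply, Prod.map, Perm.mul_apply]
  by_cases hxy : (x, y) = (i, j)
  · simp_all [hij.lt]
  by_cases hyx : (x, y) = (j, i)
  · simp_all [hij.lt.not_gt, h.not_gt]
  · simp [hxy, swap_lt_swap_iff_of_covBy hij hxy hyx]

theorem invCount_mul_swap_of_covBy {σ : Perm (Fin n)} {i j : Fin n} (hij : i ⋖ j)
    (h : σ i < σ j) : invCount (σ * swap i j) = invCount σ + 1 := by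
  have hnotMem : (i, j) ∉ (invSet σ).map ((swap i j).prodCongr (swap i j)).toEmbedding := by
    simp [invSet, hij.lt.not_gt]
  rw [invCount_eq_card_invSet, invCount_eq_card_invSet, invSet_mul_swap_of_covBy hij h,
    Finset.card_insert_of_notMem hnotMem, Finset.card_map]

theorem bruhatCover_mul_swap {σ : Perm (Fin n)} {i j : Fin n} (hij : i ⋖ j) (h : σ i < σ j) :
    BruhatCover σ (σ * swap i j) :=
  ⟨⟨σ i, σ j, h.ne, mul_swap_eq_swap_mul σ i j⟩, invCount_mul_swap_of_covBy hij h⟩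

theorem bruhatCover_swap_mul {σ : Perm (Fin n)} {a b : Fin n} (hab : a ⋖ b)
    (h : σ⁻¹ a < σ⁻¹ b) : BruhatCover σ (swap a b * σ) := by
  refine ⟨⟨a, b, hab.lt.ne, rfl⟩, ?_⟩
  rw [← invCount_inv, mul_inv_rev, swap_inv, invCount_mul_swap_of_covBy hab h, invCount_inv]

theorem mul_swap_bruhatCover {σ : Perm (Fin n)} {i j : Fin n} (hij : i ⋖ j) (h : σ j < σ i) :
    BruhatCover (σ * swap i j) σ := by
  simpa only [mul_swap_mul_self] using
    bruhatCover_mul_swap (σ := σ * swap i j) hij (by simpa only [Perm.mul_apply, swap_apply_left,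
      swap_apply_right] using h)

theorem swap_mul_bruhatCover {σ : Perm (Fin n)} {a b : Fin n} (hab : a ⋖ b)
    (h : σ⁻¹ b < σ⁻¹ a) : BruhatCover (swap a b * σ) σ := by
  simpa only [swap_mul_self_mul] using
    bruhatCover_swap_mul (σ := swap a b * σ) hab (by simpa only [mul_inv_rev, swap_inv,
      Perm.mul_apply, swap_apply_left, swap_apply_right] using h)

theorem bruhatLE_of_forall_exists_cover_up (P : Perm (Fin n) → Prop) (τ : Perm (Fin n))
    (step : ∀ σ, P σ → σ ≠ τ → ∃ σ', BruhatCover σ σ' ∧ P σ') {σ : Perm (Fin n)} (hσ : P σ) :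
    BruhatLE σ τ := by
  induction hk : Fintype.card (Fin n × Fin n) - invCount σ using Nat.strong_induction_on
    generalizing σ with
  | _ k ih =>
    obtain rfl | hne := eq_or_ne σ τ
    · exact .refl
    obtain ⟨σ', hcov, hσ'⟩ := step σ hσ hne
    have := hcov.2
    have := invCount_le_card σ'
    exact .head hcov (ih _ (by omega) hσ' rfl)

theorem bruhatLE_of_forall_exists_cover_down (P : Perm (Fin n) → Prop) (ρ : Perm (Fin n))
    (step : ∀ σ, P σ → σ ≠ ρ → ∃ σ', BruhatCover σ' σ ∧ P σ') {σ : Perm (Fin n)} (hσ : P σ) :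
    BruhatLE ρ σ := by
  induction hk : invCount σ using Nat.strong_induction_on generalizing σ with
  | _ k ih =>
    obtain rfl | hne := eq_or_ne σ ρ
    · exact .refl
    obtain ⟨σ', hcov, hσ'⟩ := step σ hσ hne
    have := hcov.2
    exact .tail (ih _ (by omega) hσ' rfl) hcov

variable [NeZero n]

theorem exists_bruhatCover_of_apply_zero_le {σ τ : Perm (Fin n)} (hτ : StrictAntiOn τ (Ioi 0))
    (hσ : σ 0 ≤ τ 0) (hne : σ ≠ τ) : ∃ σ', BruhatCover σ σ' ∧ σ' 0 ≤ τ 0 := by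
  by_cases hanti : StrictAntiOn σ (Ioi 0)
  · obtain hlt | heq := hσ.lt_or_eq
    · have hmax : ¬IsMax (σ 0) := not_isMax_of_lt hlt
      refine ⟨swap (σ 0) (succ (σ 0)) * σ,
        bruhatCover_swap_mul (covBy_succ_of_not_isMax hmax) ?_, ?_⟩
      · rw [Perm.inv_def, symm_apply_apply, Fin.pos_iff_ne_zero']
        exact fun h => (lt_succ_of_not_isMax hmax).ne' (Perm.inv_eq_iff_eq.1 h)
      · simpa using succ_le_of_lt hlt
    · refine absurd (eq_of_strictAntiOn_of_eqOn_compl hanti hτ fun x hx => ?_) hne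
      rw [compl_Ioi, mem_Iic, nonpos_iff_eq_zero] at hx
      rwa [hx]
  · obtain ⟨a, hmax, ha, hsa, hlt⟩ :=
      exists_lt_succ_of_not_strictAntiOn σ.injective ordConnected_Ioi hanti
    refine ⟨σ * swap a (succ a), bruhatCover_mul_swap (covBy_succ_of_not_isMax hmax) hlt, ?_⟩
    rwa [Perm.mul_apply, swap_apply_of_ne_of_ne (ne_of_lt ha) (ne_of_lt hsa)]

theorem exists_bruhatCover_of_le_apply_zero {ρ σ : Perm (Fin n)} (hρ : StrictMonoOn ρ (Ioi 0))
    (hσ : ρ 0 ≤ σ 0) (hne : σ ≠ ρ) : ∃ σ', BruhatCover σ' σ ∧ ρ 0 ≤ σ' 0 := by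
  by_cases hmono : StrictMonoOn σ (Ioi 0)
  · obtain hlt | heq := hσ.lt_or_eq
    · have hmin : ¬IsMin (σ 0) := not_isMin_of_lt hlt
      refine ⟨swap (pred (σ 0)) (σ 0) * σ,
        swap_mul_bruhatCover (pred_covBy_of_not_isMin hmin) ?_, ?_⟩
      · rw [Perm.inv_def, symm_apply_apply, Fin.pos_iff_ne_zero']
        exact fun h => (pred_lt_of_not_isMin hmin).ne (Perm.inv_eq_iff_eq.1 h)
      · simpa using le_pred_of_lt hlt
    · refine absurd (eq_of_strictMonoOn_of_eqOn_compl hmono hρ fun x hx => ?_) hne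
      rw [compl_Ioi, mem_Iic, nonpos_iff_eq_zero] at hx
      rw [hx, heq]
  · obtain ⟨a, hmax, ha, hsa, hlt⟩ :=
      exists_succ_lt_of_not_strictMonoOn σ.injective ordConnected_Ioi hmono
    refine ⟨σ * swap a (succ a), mul_swap_bruhatCover (covBy_succ_of_not_isMax hmax) hlt, ?_⟩
    rwa [Perm.mul_apply, swap_apply_of_ne_of_ne (ne_of_lt ha) (ne_of_lt hsa)]

theorem bruhatLE_of_apply_zero_le {σ τ : Perm (Fin n)} (hτ : StrictAntiOn τ (Ioi 0))
    (hσ : σ 0 ≤ τ 0) : BruhatLE σ τ :=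
  bruhatLE_of_forall_exists_cover_up (fun σ => σ 0 ≤ τ 0) τ
    (fun _ hσ hne => exists_bruhatCover_of_apply_zero_le hτ hσ hne) hσ

theorem bruhatLE_of_le_apply_zero {ρ σ : Perm (Fin n)} (hρ : StrictMonoOn ρ (Ioi 0))
    (hσ : ρ 0 ≤ σ 0) : BruhatLE ρ σ :=
  bruhatLE_of_forall_exists_cover_down (fun σ => ρ 0 ≤ σ 0) ρ
    (fun _ hσ hne => exists_bruhatCover_of_le_apply_zero hρ hσ hne) hσ

end Bruhat

theorem bruhat_cover_by_two_intervals_general (n r : ℕ) (hrn : r + 1 ≤ n)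
    (rω re : Equiv.Perm (Fin n))
    (hrω : ∀ i : Fin n, (rω i : ℕ) =
      if (i : ℕ) = 0 then r - 1
      else if (i : ℕ) ≤ n - r then n - (i : ℕ)
      else n - (i : ℕ) - 1)
    (hre : ∀ i : Fin n, (re i : ℕ) =
      if (i : ℕ) = 0 then r - 1
      else if (i : ℕ) ≤ r - 1 then (i : ℕ) - 1
      else (i : ℕ)) :
    (∀ σ : Equiv.Perm (Fin n), BruhatLE σ rω ∨ BruhatLE re σ) ∧
    (Set.univ : Set (Equiv.Perm (Fin n))) =
      {z | BruhatLE 1 z ∧ BruhatLE z rω} ∪ {z | BruhatLE re z ∧ BruhatLE z Fin.revPerm} := by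
  have : NeZero n := ⟨by omega⟩
  have hrω_anti : StrictAntiOn rω (Ioi 0) := by
    intro i hi j _ hij
    rw [mem_Ioi, Fin.pos_iff_ne_zero', ne_eq, Fin.ext_iff, Fin.val_zero] at hi
    rw [Fin.lt_def] at hij ⊢
    rw [hrω, hrω]
    split_ifs <;> omega
  have hre_mono : StrictMonoOn re (Ioi 0) := by
    intro i hi j _ hij
    rw [mem_Ioi, Fin.pos_iff_ne_zero', ne_eq, Fin.ext_iff, Fin.val_zero] at hi
    rw [Fin.lt_def] at hij ⊢
    rw [hre, hre]
    split_ifs <;> omega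
  have hhead : rω 0 = re 0 := Fin.ext (by rw [hrω, hre, Fin.val_zero, if_pos rfl, if_pos rfl])
  have hcover (σ : Perm (Fin n)) : BruhatLE σ rω ∨ BruhatLE re σ :=
    (le_total (σ 0) (rω 0)).imp (bruhatLE_of_apply_zero_le hrω_anti)
      fun h => bruhatLE_of_le_apply_zero hre_mono (hhead ▸ h)
  refine ⟨hcover, (eq_univ_of_forall fun z => (hcover z).imp (fun h => ⟨?_, h⟩) (⟨·, ?_⟩)).symm⟩
  · exact bruhatLE_of_le_apply_zero (strictMono_id.strictMonoOn _) (Fin.zero_le _)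
  · exact bruhatLE_of_apply_zero_le (Fin.rev_strictAnti.strictAntiOn _) (Fin.le_rev_iff.2 (Fin.zero_le _))

theorem bruhat_cover_by_two_intervals (n r : ℕ) (hr : 2 ≤ r) (hrn : r + 1 ≤ n)
    (rω re : Equiv.Perm (Fin n))
    (hrω : ∀ i : Fin n, (rω i : ℕ) =
      if (i : ℕ) = 0 then r - 1
      else if (i : ℕ) ≤ n - r then n - (i : ℕ)
      else n - (i : ℕ) - 1)
    (hre : ∀ i : Fin n, (re i : ℕ) =
      if (i : ℕ) = 0 then r - 1
      else if (i : ℕ) ≤ r - 1 then (i : ℕ) - 1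
      else (i : ℕ)) :
    (∀ σ : Equiv.Perm (Fin n), BruhatLE σ rω ∨ BruhatLE re σ) ∧
    (Set.univ : Set (Equiv.Perm (Fin n))) =
      {z | BruhatLE 1 z ∧ BruhatLE z rω} ∪ {z | BruhatLE re z ∧ BruhatLE z Fin.revPerm} :=
  bruhat_cover_by_two_intervals_general n r hrn rω re hrω hre
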